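/- arXiv:0810.0821 — 4 statements merged into one kernel-verified Lean document; each statement's English description precedes it below -/
import Mathlib

section
/- Let A be a commutative ring of characteristic p, let 𝔞 ⊆ A be a nilpotent ideal, Ā = A/𝔞, and let b, b′ ∈ GL_r(A((z))) with reductions b̄, b̄′ ∈ GL_r(Ā((z))). Then reduction modulo 𝔞 gives a bijection from the set { f ∈ GL_r(A((z))) : f·b = b′·σ(f) } onto the set { f̄ ∈ GL_r(Ā((z))) : f̄·b̄ = b̄′·σ(f̄) }. -/
noncomputable section

open scoped Classical

namespace HVpaper

variable {A : Type*} [CommRing A]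

/-- Coefficientwise `q`-th power map on formal Laurent series (the map `σ` for `q ≠ 0`;
junk value `0` for `q = 0`). -/
def laurentFrob (q : ℕ) (x : LaurentSeries A) : LaurentSeries A :=
  if hq : q = 0 then 0 else x.map (ZeroHom.mk (fun a : A => a ^ q) (zero_pow hq))

/-- Entrywise `σ` on matrices of Laurent series. -/
def matFrob (q : ℕ) {n : Type*} (M : Matrix n n (LaurentSeries A)) :
    Matrix n n (LaurentSeries A) :=
  M.map (laurentFrob q)

/-- `x` lies in `z^n · A⟦z⟧`, i.e. all coefficients below `n` vanish. -/
def InZPow (n : ℤ) (x : LaurentSeries A) : Prop :=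
  ∀ m : ℤ, m < n → x.coeff m = 0

/-- `x` lies in the subring `A⟦z⟧` of `A((z))`. -/
def InPS (x : LaurentSeries A) : Prop :=
  ∀ m : ℤ, m < 0 → x.coeff m = 0

/-- `u` is a unit of the subring `A⟦z⟧` of `A((z))`. -/
def IsPSUnit (u : LaurentSeries A) : Prop :=
  InPS u ∧ ∃ v : LaurentSeries A, InPS v ∧ u * v = 1

/-- The element `z^n` of `A((z))`. -/
def zPow (n : ℤ) : LaurentSeries A :=
  HahnSeries.single n 1

/-- The coefficientwise map on Laurent series induced by a ring homomorphism. -/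
def lmap {B : Type*} [CommRing B] (f : A →+* B) (x : LaurentSeries A) : LaurentSeries B :=
  x.map f

variable {k : Type*} [Field k]

/-- Membership in the subgroup `I_n` of `GL_r(k⟦z⟧)`:  `g` and its inverse have entries in
`k⟦z⟧`, `g ≡ 1 mod z^n` on the diagonal, the entries above the diagonal lie in `z^n k⟦z⟧` and
those below the diagonal lie in `z^(n+1) k⟦z⟧`.  For `n = 0` this is the standard Iwahori
subgroup. -/
def InIwahori {r : ℕ} (n : ℕ) (g : Matrix (Fin r) (Fin r) (LaurentSeries k)) : Prop :=
  (∀ i j, InPS (g i j)) ∧ IsUnit g ∧ (∀ i j, InPS (g⁻¹ i j)) ∧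
  (∀ i : Fin r, InZPow (n : ℤ) (g i i - 1)) ∧
  (∀ i j : Fin r, i < j → InZPow (n : ℤ) (g i j)) ∧
  (∀ i j : Fin r, j < i → InZPow ((n : ℤ) + 1) (g i j))

/-- The sum of the `i` smallest (i.e. last `i`) entries of the nonincreasing tuple `μ`. -/
def lowSum {r : ℕ} (μ : Fin r → ℤ) (i : ℕ) : ℤ :=
  ∑ j : Fin r, if r ≤ (j : ℕ) + i then μ j else 0

/-- The matrix `M` over `A((z))` is bounded by the dominant cocharacter
`μ = (μ 0 ≥ … ≥ μ (r-1))` of `GL_r`: for each `1 ≤ i ≤ r` every `i×i` minor of `M` lies in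
`z^(μ_{r-i+1}+⋯+μ_r)·A⟦z⟧` and `det M = z^(μ_1+⋯+μ_r)` times a unit of `A⟦z⟧`. -/
def BoundedBy {r : ℕ} (μ : Fin r → ℤ) (M : Matrix (Fin r) (Fin r) (LaurentSeries A)) : Prop :=
  (∀ i : Fin r, ∀ ri ci : Fin ((i : ℕ) + 1) → Fin r,
    InZPow (lowSum μ ((i : ℕ) + 1)) ((M.submatrix ri ci).det)) ∧
  (∃ u : LaurentSeries A, IsPSUnit u ∧ M.det = zPow (∑ j, μ j) * u)

/-!
Put `T f = b' σ(f) b⁻¹`. Quasi-isogenies are the invertible fixed points of `T`, which is additive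
because `σ` is a ring endomorphism in characteristic `p`, and reduction modulo `𝔞` intertwines `T`
with its analogue over `Ā`. As `σ` raises coefficients to the power `q ≥ 2`, `T` maps matrices with
coefficients in `𝔞^(k+1)` to matrices with coefficients in `𝔞^(k+2)`, so some iterate `T^N` kills
the kernel of reduction. Hence two fixed points with the same reduction coincide, and if `f₀` lifts
a fixed point over `Ā` then so does the fixed point `T^N f₀`. Invertibility lifts because the
kernel of reduction consists of nilpotent elements.
-/

open Function in
theorem bijOn_fixedPoints_of_semiconj {M M' F : Type*} [AddGroup M] [AddGroup M']
    [FunLike F M M'] [AddMonoidHomClass F M M'] {Φ : F} (hΦ : Surjective Φ) {T : M →+ M}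
    {T' : M' → M'} (hT : Semiconj Φ T T') {N : ℕ} (hN : ∀ x, Φ x = 0 → T^[N] x = 0) :
    Set.BijOn Φ (fixedPoints T) (fixedPoints T') := by
  refine ⟨fun x hx => hx.map hT, fun x hx y hy hxy => ?_, fun y hy => ?_⟩
  · have hfix : IsFixedPt T (x - y) := (map_sub T x y).trans (by rw [hx.eq, hy.eq])
    rw [← sub_eq_zero, ← (hfix.iterate N).eq, hN _ (by rw [map_sub, hxy, sub_self])]
  · obtain ⟨x, rfl⟩ := hΦ y
    have hdrift : Φ (T x - x) = 0 := by rw [map_sub, hT.eq, hy.eq, sub_self]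
    refine ⟨T^[N] x, ?_, by rw [(hT.iterate_right N).eq, (hy.iterate N).eq]⟩
    change T (T^[N] x) = T^[N] x
    rw [← iterate_succ_apply' T, iterate_succ_apply, ← sub_eq_zero,
      ← iterate_map_sub, hN _ hdrift]

lemma isFixedPt_mul_mul_iff {R : Type*} [Monoid R] {σ : R → R} {b c : R} (hcb : c * b = 1)
    (hbc : b * c = 1) (b' f : R) :
    Function.IsFixedPt (fun g => b' * σ g * c) f ↔ f * b = b' * σ f := by
  refine ⟨fun h => ?_, fun h => ?_⟩
  · calc f * b = b' * σ f * c * b := by rw [h.eq]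
      _ = b' * σ f := by rw [mul_assoc, hcb, mul_one]
  · change b' * σ f * c = f
    rw [← h, mul_assoc, hbc, mul_one]

lemma fixedPoints_mul_mul_inter_setOf_isUnit {R : Type*} [Monoid R] {σ : R → R} {b c : R}
    (hcb : c * b = 1) (hbc : b * c = 1) (b' : R) :
    Function.fixedPoints (fun g => b' * σ g * c) ∩ {f | IsUnit f} =
      {f | IsUnit f ∧ f * b = b' * σ f} := by
  ext f
  rw [Set.mem_inter_iff, Function.mem_fixedPoints, isFixedPt_mul_mul_iff hcb hbc, and_comm]
  rfl

lemma isUnit_of_isUnit_map_of_isNilpotent_ker {R S : Type*} [CommRing R] [Ring S] {f : R →+* S}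
    (hf : Function.Surjective f) (hker : ∀ x ∈ RingHom.ker f, IsNilpotent x) {x : R}
    (hx : IsUnit (f x)) : IsUnit x := by
  obtain ⟨y, hy⟩ := hf ↑hx.unit⁻¹
  have : IsNilpotent (x * y - 1) := hker _ <| by simp [RingHom.mem_ker, hy]
  exact isUnit_of_mul_isUnit_left (by simpa using this.isUnit_one_add)

section LaurentSeries

variable {B : Type*} [CommRing B]

@[simp]
lemma lmap_coeff (f : A →+* B) (x : LaurentSeries A) (m : ℤ) :
    (lmap f x).coeff m = f (x.coeff m) :=
  rfl

def lmapRingHom (f : A →+* B) : LaurentSeries A →+* LaurentSeries B where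
  toFun := lmap f
  map_one' := HahnSeries.map_one f.toMonoidWithZeroHom
  map_mul' _ _ := HahnSeries.map_mul f.toNonUnitalRingHom
  map_zero' := by ext; simp
  map_add' _ _ := by ext; simp

@[simp]
lemma coe_lmapRingHom (f : A →+* B) : ⇑(lmapRingHom f) = lmap f :=
  rfl

lemma lmap_surjective {f : A →+* B} (hf : Function.Surjective f) :
    Function.Surjective (lmap (A := A) f) := by
  -- the section must send `0` to `0` to preserve supports
  let s : ZeroHom B A := ⟨fun b => if b = 0 then 0 else Function.surjInv hf b, if_pos rfl⟩
  refine fun y => ⟨y.map s, HahnSeries.ext <| funext fun m => ?_⟩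
  by_cases hm : y.coeff m = 0 <;> simp [s, hm, Function.surjInv_eq hf]

lemma lmap_laurentFrob (f : A →+* B) (q : ℕ) (x : LaurentSeries A) :
    lmap f (laurentFrob q x) = laurentFrob q (lmap f x) := by
  rcases eq_or_ne q 0 with rfl | hq
  · ext; simp [laurentFrob]
  · ext m
    simp [laurentFrob, hq]

lemma laurentFrob_eq_lmap_iterateFrobenius (p e : ℕ) [ExpChar A p] :
    laurentFrob (p ^ e) = lmap (iterateFrobenius A p e) := by
  ext x m
  simp [laurentFrob, (expChar_pos A p).ne', iterateFrobenius_def]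

def coeffIdeal (J : Ideal A) : Ideal (LaurentSeries A) :=
  RingHom.ker (lmapRingHom (Ideal.Quotient.mk J))

lemma mem_coeffIdeal {J : Ideal A} {x : LaurentSeries A} :
    x ∈ coeffIdeal J ↔ ∀ m, x.coeff m ∈ J := by
  simp [coeffIdeal, RingHom.mem_ker, HahnSeries.ext_iff, funext_iff,
    Ideal.Quotient.eq_zero_iff_mem]

lemma coeffIdeal_mono {J K : Ideal A} (h : J ≤ K) : coeffIdeal J ≤ coeffIdeal K :=
  fun _ hx => mem_coeffIdeal.2 fun m => h (mem_coeffIdeal.1 hx m)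

lemma coeffIdeal_bot : coeffIdeal (⊥ : Ideal A) = ⊥ := by
  ext x
  simp [mem_coeffIdeal, HahnSeries.ext_iff, funext_iff]

lemma mul_mem_coeffIdeal_mul {J K : Ideal A} {x y : LaurentSeries A} (hx : x ∈ coeffIdeal J)
    (hy : y ∈ coeffIdeal K) : x * y ∈ coeffIdeal (J * K) := by
  refine mem_coeffIdeal.2 fun m => ?_
  rw [HahnSeries.coeff_mul]
  exact Ideal.sum_mem _ fun _ _ =>
    Ideal.mul_mem_mul (mem_coeffIdeal.1 hx _) (mem_coeffIdeal.1 hy _)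

lemma pow_mem_coeffIdeal_pow {J : Ideal A} {x : LaurentSeries A} (hx : x ∈ coeffIdeal J) :
    ∀ n : ℕ, x ^ n ∈ coeffIdeal (J ^ n)
  | 0 => by simpa using mem_coeffIdeal.2 fun _ => Submodule.mem_top
  | n + 1 => by
    rw [pow_succ, pow_succ]
    exact mul_mem_coeffIdeal_mul (pow_mem_coeffIdeal_pow hx n) hx

lemma laurentFrob_mem_coeffIdeal_pow {J : Ideal A} {x : LaurentSeries A} (hx : x ∈ coeffIdeal J)
    (q : ℕ) : laurentFrob q x ∈ coeffIdeal (J ^ q) := by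
  rcases eq_or_ne q 0 with rfl | hq
  · simp [laurentFrob]
  · exact mem_coeffIdeal.2 fun m => by
      simpa [laurentFrob, hq] using Ideal.pow_mem_pow (mem_coeffIdeal.1 hx m) q

lemma isNilpotent_of_mem_coeffIdeal {J : Ideal A} (hJ : IsNilpotent J) {x : LaurentSeries A}
    (hx : x ∈ coeffIdeal J) : IsNilpotent x := by
  obtain ⟨N, hN⟩ := hJ
  refine ⟨N, ?_⟩
  simpa [hN, coeffIdeal_bot] using pow_mem_coeffIdeal_pow hx N

end LaurentSeries

section Matrix

variable {n : Type*} [Fintype n] [DecidableEq n]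

def reduceMod (J : Ideal A) :
    Matrix n n (LaurentSeries A) →+* Matrix n n (LaurentSeries (A ⧸ J)) :=
  (lmapRingHom (Ideal.Quotient.mk J)).mapMatrix

lemma reduceMod_apply (J : Ideal A) (M : Matrix n n (LaurentSeries A)) :
    reduceMod J M = M.map (lmap (Ideal.Quotient.mk J)) :=
  rfl

lemma reduceMod_eq_zero_iff {J : Ideal A} {M : Matrix n n (LaurentSeries A)} :
    reduceMod J M = 0 ↔ ∀ i j, M i j ∈ coeffIdeal J := by
  simp [reduceMod_apply, ← Matrix.ext_iff, coeffIdeal, RingHom.mem_ker]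

lemma reduceMod_eq_zero_of_le {J K : Ideal A} (h : J ≤ K) {M : Matrix n n (LaurentSeries A)}
    (hM : reduceMod J M = 0) : reduceMod K M = 0 :=
  reduceMod_eq_zero_iff.2 fun i j => coeffIdeal_mono h (reduceMod_eq_zero_iff.1 hM i j)

lemma eq_zero_of_reduceMod_bot_eq_zero {M : Matrix n n (LaurentSeries A)}
    (hM : reduceMod ⊥ M = 0) : M = 0 := by
  ext i j : 1
  simpa [coeffIdeal_bot] using reduceMod_eq_zero_iff.1 hM i j

lemma reduceMod_surjective (J : Ideal A) : Function.Surjective (reduceMod (n := n) J) :=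
  have hJ := lmap_surjective (Ideal.Quotient.mk_surjective (I := J))
  fun N => ⟨N.map (Function.surjInv hJ), Matrix.ext fun i j => Function.surjInv_eq hJ (N i j)⟩

lemma isUnit_of_isUnit_reduceMod {J : Ideal A} (hJ : IsNilpotent J)
    {M : Matrix n n (LaurentSeries A)} (hM : IsUnit (reduceMod J M)) : IsUnit M := by
  rw [Matrix.isUnit_iff_isUnit_det] at hM ⊢
  rw [reduceMod, ← RingHom.map_det] at hM
  exact isUnit_of_isUnit_map_of_isNilpotent_ker (lmap_surjective Ideal.Quotient.mk_surjective)
    (fun x hx => isNilpotent_of_mem_coeffIdeal hJ hx) hM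

lemma reduceMod_matFrob (J : Ideal A) (q : ℕ) (M : Matrix n n (LaurentSeries A)) :
    reduceMod J (matFrob q M) = matFrob q (reduceMod J M) := by
  ext i j : 1
  exact lmap_laurentFrob _ q (M i j)

lemma reduceMod_pow_matFrob_eq_zero {J : Ideal A} {M : Matrix n n (LaurentSeries A)}
    (hM : reduceMod J M = 0) (q : ℕ) : reduceMod (J ^ q) (matFrob q M) = 0 :=
  reduceMod_eq_zero_iff.2 fun i j =>
    laurentFrob_mem_coeffIdeal_pow (reduceMod_eq_zero_iff.1 hM i j) q

def matFrobHom (p e : ℕ) [ExpChar A p] :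
    Matrix n n (LaurentSeries A) →+* Matrix n n (LaurentSeries A) :=
  (lmapRingHom (iterateFrobenius A p e)).mapMatrix

lemma matFrobHom_apply (p e : ℕ) [ExpChar A p] (M : Matrix n n (LaurentSeries A)) :
    matFrobHom p e M = matFrob (p ^ e) M := by
  simp [matFrobHom, matFrob, laurentFrob_eq_lmap_iterateFrobenius]

def twistedFrob (p e : ℕ) [ExpChar A p] (u v : Matrix n n (LaurentSeries A)) :
    Matrix n n (LaurentSeries A) →+ Matrix n n (LaurentSeries A) :=
  (AddMonoidHom.mulRight v).comp ((AddMonoidHom.mulLeft u).comp (matFrobHom p e).toAddMonoidHom)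

lemma twistedFrob_apply (p e : ℕ) [ExpChar A p] (u v M : Matrix n n (LaurentSeries A)) :
    twistedFrob p e u v M = u * matFrob (p ^ e) M * v := by
  simp [twistedFrob, matFrobHom_apply]

lemma coe_twistedFrob (p e : ℕ) [ExpChar A p] (u v : Matrix n n (LaurentSeries A)) :
    ⇑(twistedFrob p e u v) = fun M => u * matFrob (p ^ e) M * v :=
  funext (twistedFrob_apply p e u v)

lemma reduceMod_pow_iterate_twistedFrob_eq_zero {p e : ℕ} [ExpChar A p] (hq : 2 ≤ p ^ e)
    (u v : Matrix n n (LaurentSeries A)) {J : Ideal A} {M : Matrix n n (LaurentSeries A)}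
    (hM : reduceMod J M = 0) :
    ∀ k : ℕ, reduceMod (J ^ (k + 1)) ((twistedFrob p e u v)^[k] M) = 0
  | 0 => by rwa [zero_add, pow_one]
  | k + 1 => by
    have hle : (J ^ (k + 1)) ^ p ^ e ≤ J ^ (k + 2) := by
      rw [← pow_mul]
      exact Ideal.pow_le_pow_right (by nlinarith)
    rw [Function.iterate_succ_apply', twistedFrob_apply, map_mul, map_mul,
      reduceMod_eq_zero_of_le hle (reduceMod_pow_matFrob_eq_zero
        (reduceMod_pow_iterate_twistedFrob_eq_zero hq u v hM k) _), mul_zero, zero_mul]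

lemma iterate_twistedFrob_eq_zero {p e : ℕ} [ExpChar A p] (hq : 2 ≤ p ^ e)
    (u v : Matrix n n (LaurentSeries A)) {J : Ideal A} {N : ℕ} (hN : J ^ N = ⊥)
    {M : Matrix n n (LaurentSeries A)} (hM : reduceMod J M = 0) :
    (twistedFrob p e u v)^[N] M = 0 := by
  refine eq_zero_of_reduceMod_bot_eq_zero ?_
  rw [← hN]
  exact reduceMod_eq_zero_of_le (Ideal.pow_le_pow_right N.le_succ)
    (reduceMod_pow_iterate_twistedFrob_eq_zero hq u v hM N)

end Matrix

theorem rigidity_of_quasi_isogenies_general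
    {p : ℕ} (hp : p.Prime) {e : ℕ} (he : 1 ≤ e) {q : ℕ} (hq : q = p ^ e)
    {A : Type*} [CommRing A] [CharP A p]
    (𝔞 : Ideal A) (h𝔞 : IsNilpotent 𝔞)
    {r : ℕ}
    (b b' : Matrix (Fin r) (Fin r) (LaurentSeries A)) (hb : IsUnit b) :
    Set.BijOn
      (fun f : Matrix (Fin r) (Fin r) (LaurentSeries A) =>
        f.map (lmap (Ideal.Quotient.mk 𝔞)))
      {f : Matrix (Fin r) (Fin r) (LaurentSeries A) |
        IsUnit f ∧ f * b = b' * matFrob q f}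
      {g : Matrix (Fin r) (Fin r) (LaurentSeries (A ⧸ 𝔞)) |
        IsUnit g ∧
          g * b.map (lmap (Ideal.Quotient.mk 𝔞)) =
            b'.map (lmap (Ideal.Quotient.mk 𝔞)) * matFrob q g} := by
  have : Fact p.Prime := ⟨hp⟩
  have hq2 : 2 ≤ q := hq ▸ hp.two_le.trans (Nat.le_self_pow (by omega) p)
  subst hq
  obtain ⟨N, hN⟩ := h𝔞
  obtain ⟨u, rfl⟩ := hb
  let Φ := reduceMod (n := Fin r) 𝔞
  have hsemi : Function.Semiconj Φ (twistedFrob p e b' ↑u⁻¹)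
      (fun g => Φ b' * matFrob (p ^ e) g * Φ ↑u⁻¹) := fun f => by
    simp only [twistedFrob_apply, map_mul, Φ, reduceMod_matFrob]
  have hbij := (bijOn_fixedPoints_of_semiconj (reduceMod_surjective 𝔞) hsemi
    fun f hf => iterate_twistedFrob_eq_zero hq2 _ _ hN hf).inter_mapsTo
    (s₂ := {f | IsUnit f}) (t₂ := {g | IsUnit g})
    (fun f hf => hf.map Φ) (fun f hf => isUnit_of_isUnit_reduceMod ⟨N, hN⟩ hf.2)
  have hcb : Φ ↑u⁻¹ * Φ u = 1 := (u.map Φ.toMonoidHom).inv_mul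
  have hbc : Φ u * Φ ↑u⁻¹ = 1 := (u.map Φ.toMonoidHom).mul_inv
  rwa [coe_twistedFrob, fixedPoints_mul_mul_inter_setOf_isUnit u.inv_mul u.mul_inv,
    fixedPoints_mul_mul_inter_setOf_isUnit hcb hbc] at hbij

/-- **Rigidity of quasi-isogenies** (first part of Proposition 2.11, for `G = GL_r`):  if
`𝔞 ⊆ A` is a nilpotent ideal of a ring of characteristic `p` and `b, b'` define local
`GL_r`-shtukas over `A`, then reduction modulo `𝔞` is a bijection from the set of
quasi-isogenies `(A((z))^r, b·σ) → (A((z))^r, b'·σ)` onto the set of quasi-isogenies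
`(Ā((z))^r, b̄·σ) → (Ā((z))^r, b̄'·σ)`. -/
theorem rigidity_of_quasi_isogenies
    {p : ℕ} (hp : p.Prime) {e : ℕ} (he : 1 ≤ e) {q : ℕ} (hq : q = p ^ e)
    {A : Type*} [CommRing A] [CharP A p]
    (𝔞 : Ideal A) (h𝔞 : IsNilpotent 𝔞)
    {r : ℕ} (hr : 1 ≤ r)
    (b b' : Matrix (Fin r) (Fin r) (LaurentSeries A)) (hb : IsUnit b) (hb' : IsUnit b') :
    Set.BijOn
      (fun f : Matrix (Fin r) (Fin r) (LaurentSeries A) =>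
        f.map (lmap (Ideal.Quotient.mk 𝔞)))
      {f : Matrix (Fin r) (Fin r) (LaurentSeries A) |
        IsUnit f ∧ f * b = b' * matFrob q f}
      {g : Matrix (Fin r) (Fin r) (LaurentSeries (A ⧸ 𝔞)) |
        IsUnit g ∧
          g * b.map (lmap (Ideal.Quotient.mk 𝔞)) =
            b'.map (lmap (Ideal.Quotient.mk 𝔞)) * matFrob q g} :=
  rigidity_of_quasi_isogenies_general hp he hq 𝔞 h𝔞 b b' hb

end HVpaper
end
end

section
/- Let A be a reduced commutative ring whose spectrum Spec A is connected. Then every unit u of the Laurent series ring A((z)) = A⟦z⟧[1/z] can be written as u = z^m·w for some integer m and some unit w of the power series ring A⟦z⟧. -/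
noncomputable section

open scoped Classical

namespace HVpaper

variable {A : Type*} [CommRing A]

variable {k : Type*} [Field k]

/-!
For a prime `p` of `A`, the image of a unit `u` in `(A ⧸ p)((z))` is a unit over a domain, so it
has an order `ord_p u`, and `ord_p u + ord_p u⁻¹ = 0`. The set `{p | n ≤ ord_p u}` is the zero
locus of the coefficients of `u` below `n`, hence closed; its complement is
`{p | 1 - n ≤ ord_p u⁻¹}`, also closed. So `p ↦ ord_p u` is locally constant, hence constant,
equal to some `m`, on the connected space `Spec A`. Then every coefficient of `u` below `m` (and of
`u⁻¹` below `-m`) lies in every prime, so vanishes as `A` is reduced, and `z^(-m) u` is a unit of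
`A⟦z⟧`.
-/

open HahnSeries

def orderAt (p : PrimeSpectrum A) (x : LaurentSeries A) : ℤ :=
  (x.map (Ideal.Quotient.mk p.asIdeal)).order

lemma map_mul_map_inv {B : Type*} [CommRing B] (f : A →+* B) (u : (LaurentSeries A)ˣ) :
    (u : LaurentSeries A).map f * (↑u⁻¹ : LaurentSeries A).map f = 1 := by
  calc _ = ((u : LaurentSeries A) * ↑u⁻¹).map (f : A →ₙ+* B) := (HahnSeries.map_mul _).symm
    _ = 1 := by
      rw [u.mul_inv]
      exact HahnSeries.map_one f.toMonoidWithZeroHom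

section orderAt

variable (p : PrimeSpectrum A) (u : (LaurentSeries A)ˣ)

lemma orderAt_add_orderAt_inv : orderAt p u + orderAt p ↑u⁻¹ = 0 := by
  have h := map_mul_map_inv (Ideal.Quotient.mk p.asIdeal) u
  rw [orderAt, orderAt, ← order_mul (left_ne_zero_of_mul_eq_one h)
    (right_ne_zero_of_mul_eq_one h), h, order_one]

lemma le_orderAt_iff {n : ℤ} :
    n ≤ orderAt p u ↔ ∀ k < n, (u : LaurentSeries A).coeff k ∈ p.asIdeal := by
  rw [orderAt, le_order_iff_forall
    (left_ne_zero_of_mul_eq_one (map_mul_map_inv (Ideal.Quotient.mk p.asIdeal) u))]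
  simp only [map_coeff, Ideal.Quotient.eq_zero_iff_mem]

end orderAt

lemma isClosed_setOf_le_orderAt (u : (LaurentSeries A)ˣ) (n : ℤ) :
    IsClosed {p : PrimeSpectrum A | n ≤ orderAt p u} := by
  convert PrimeSpectrum.isClosed_zeroLocus ((u : LaurentSeries A).coeff '' Set.Iio n) using 1
  ext p
  simp [le_orderAt_iff, PrimeSpectrum.mem_zeroLocus, Set.subset_def]

lemma isClopen_setOf_le_orderAt (u : (LaurentSeries A)ˣ) (n : ℤ) :
    IsClopen {p : PrimeSpectrum A | n ≤ orderAt p u} := by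
  refine ⟨isClosed_setOf_le_orderAt u n, ?_⟩
  have hcompl : {p : PrimeSpectrum A | n ≤ orderAt p u}ᶜ =
      {p | 1 - n ≤ orderAt p ↑u⁻¹} := by
    ext p
    have := orderAt_add_orderAt_inv p u
    simp only [Set.mem_compl_iff, Set.mem_ofPred_eq]
    omega
  rw [← isClosed_compl_iff, hcompl]
  exact isClosed_setOf_le_orderAt u⁻¹ (1 - n)

lemma isLocallyConstant_orderAt (u : (LaurentSeries A)ˣ) :
    IsLocallyConstant fun p : PrimeSpectrum A => orderAt p (u : LaurentSeries A) := by
  refine IsLocallyConstant.iff_isOpen_fiber.mpr fun n => ?_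
  have hfiber : (fun p : PrimeSpectrum A => orderAt p (u : LaurentSeries A)) ⁻¹' {n} =
      {p | n ≤ orderAt p u} ∩ {p | n + 1 ≤ orderAt p u}ᶜ := by
    ext p
    simp only [Set.mem_preimage, Set.mem_singleton_iff, Set.mem_inter_iff, Set.mem_compl_iff,
      Set.mem_ofPred_eq]
    omega
  rw [hfiber]
  exact (isClopen_setOf_le_orderAt u n).isOpen.inter
    (isClopen_setOf_le_orderAt u (n + 1)).isClosed.isOpen_compl

lemma inZPow_of_forall_le_orderAt [IsReduced A] (u : (LaurentSeries A)ˣ) {n : ℤ}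
    (h : ∀ p, n ≤ orderAt p (u : LaurentSeries A)) : InZPow n (u : LaurentSeries A) :=
  fun k hk => (nilpotent_iff_mem_prime.mpr fun J hJ =>
    (le_orderAt_iff ⟨J, hJ⟩ u).mp (h ⟨J, hJ⟩) k hk).eq_zero

lemma zPow_mul_zPow (a b : ℤ) : (zPow a : LaurentSeries A) * zPow b = zPow (a + b) := by
  rw [zPow, zPow, zPow, single_mul_single, one_mul]

lemma zPow_zero : (zPow 0 : LaurentSeries A) = 1 :=
  single_zero_one

lemma InZPow.inPS_zPow_neg_mul {n : ℤ} {x : LaurentSeries A} (h : InZPow n x) :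
    InPS (zPow (-n) * x) := fun k hk => by
  rw [show k = k + n + -n by ring, zPow, coeff_single_mul_add, one_mul]
  exact h _ (by omega)

lemma isPSUnit_zPow_neg_mul (u : (LaurentSeries A)ˣ) {n : ℤ}
    (hu : InZPow n (u : LaurentSeries A)) (hv : InZPow (-n) (↑u⁻¹ : LaurentSeries A)) :
    IsPSUnit (zPow (-n) * (u : LaurentSeries A)) := by
  refine ⟨hu.inPS_zPow_neg_mul, zPow n * (↑u⁻¹ : LaurentSeries A),
    by simpa using hv.inPS_zPow_neg_mul, ?_⟩
  calc zPow (-n) * (u : LaurentSeries A) * (zPow n * ↑u⁻¹)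
      = zPow (-n) * zPow n * ((u : LaurentSeries A) * ↑u⁻¹) := by ring
    _ = 1 := by rw [zPow_mul_zPow, neg_add_cancel, zPow_zero, u.mul_inv, one_mul]

/-- The determinant content, for `G = GL_r`, of the Lemma following Proposition 2.11:  over a
reduced ring `A` with connected spectrum, every unit of `A((z))` is `z^m` times a unit of
`A⟦z⟧`. -/
theorem unit_of_laurent_eq_zpow_mul_unit
    {A : Type*} [CommRing A] [IsReduced A] [ConnectedSpace (PrimeSpectrum A)]
    (u : (LaurentSeries A)ˣ) :
    ∃ (m : ℤ) (w : LaurentSeries A), IsPSUnit w ∧ (u : LaurentSeries A) = zPow m * w := by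
  obtain ⟨p₀⟩ : Nonempty (PrimeSpectrum A) := inferInstance
  set m := orderAt p₀ (u : LaurentSeries A)
  have horder (p : PrimeSpectrum A) : orderAt p (u : LaurentSeries A) = m :=
    (isLocallyConstant_orderAt u).apply_eq_of_preconnectedSpace p p₀
  have hu : InZPow m (u : LaurentSeries A) :=
    inZPow_of_forall_le_orderAt u fun p => (horder p).ge
  have hv : InZPow (-m) (↑u⁻¹ : LaurentSeries A) :=
    inZPow_of_forall_le_orderAt u⁻¹ fun p => by
      have := orderAt_add_orderAt_inv p u
      have := horder p
      omega
  refine ⟨m, zPow (-m) * (u : LaurentSeries A), isPSUnit_zPow_neg_mul u hu hv, ?_⟩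
  rw [← mul_assoc, zPow_mul_zPow, add_neg_cancel, zPow_zero, one_mul]

end HVpaper
end
end

section
/- Let k be an algebraically closed field, fix a partition r = r₁ + ⋯ + r_s with associated block decomposition of r×r matrices, and let A ∈ GL_r(k((z))) be block upper triangular (all blocks strictly below the diagonal are zero). Let c₁, …, c_r ∈ ℤ and assume that for every 1 ≤ i ≤ r each i×i minor of A lies in z^{c_i}·k⟦z⟧ and det A ∈ z^{c_r}·(k⟦z⟧)ˣ. Then the block-diagonal part L(A) of A lies in GL_r(k((z))) and satisfies the same conditions: every i×i minor of L(A) lies in z^{c_i}·k⟦z⟧ and det L(A) ∈ z^{c_r}·(k⟦z⟧)ˣ. -/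
noncomputable section

open scoped Classical

namespace HVpaper

variable {A : Type*} [CommRing A]

variable {k : Type*} [Field k]

/-- If a permutation term aligns block levels, the sums of block levels on rows and columns
agree; if the sums agree, the Levi part and `M` have the same determinant on any submatrix. -/
theorem levi_aux_eq {k : Type*} [Field k] {r s n : ℕ}
    (blk : Fin r → Fin s)
    (M : Matrix (Fin r) (Fin r) (LaurentSeries k))
    (htri : ∀ i j : Fin r, blk j < blk i → M i j = 0)
    (ri ci : Fin n → Fin r)
    (hsum : (∑ a, ((blk (ri a) : ℕ))) = ∑ a, ((blk (ci a) : ℕ))) :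
    ((Matrix.of fun i j : Fin r => if blk i = blk j then M i j else 0).submatrix ri ci).det
      = (M.submatrix ri ci).det := by
  rw [Matrix.det_apply', Matrix.det_apply']
  refine Finset.sum_congr rfl fun σ _ => ?_
  congr 1
  by_cases hbad : ∃ a, blk (ci a) < blk (ri (σ a))
  · obtain ⟨a, ha⟩ := hbad
    rw [Finset.prod_eq_zero (Finset.mem_univ a), Finset.prod_eq_zero (Finset.mem_univ a)]
    · exact htri _ _ ha
    · simp only [Matrix.submatrix_apply, Matrix.of_apply]
      rw [if_neg (ne_of_gt ha)]
  · push_neg at hbad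
    have hle : ∀ a ∈ Finset.univ, (blk (ri (σ a)) : ℕ) ≤ (blk (ci a) : ℕ) :=
      fun a _ => Fin.le_iff_val_le_val.mp (hbad a)
    have hsum' : (∑ a, ((blk (ri (σ a)) : ℕ))) = ∑ a, ((blk (ci a) : ℕ)) := by
      rw [Equiv.sum_comp σ (fun a => ((blk (ri a) : ℕ)))]; exact hsum
    have heq := (Finset.sum_eq_sum_iff_of_le hle).mp hsum'
    refine Finset.prod_congr rfl fun a _ => ?_
    have : blk (ri (σ a)) = blk (ci a) :=
      Fin.ext (heq a (Finset.mem_univ a))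
    simp only [Matrix.submatrix_apply, Matrix.of_apply, if_pos this]

/-- If the sums of block levels on rows and columns disagree, the corresponding minor of the
Levi part vanishes. -/
theorem levi_aux_zero {k : Type*} [Field k] {r s n : ℕ}
    (blk : Fin r → Fin s)
    (M : Matrix (Fin r) (Fin r) (LaurentSeries k))
    (ri ci : Fin n → Fin r)
    (hsum : (∑ a, ((blk (ri a) : ℕ))) ≠ ∑ a, ((blk (ci a) : ℕ))) :
    ((Matrix.of fun i j : Fin r => if blk i = blk j then M i j else 0).submatrix ri ci).det
      = 0 := by
  rw [Matrix.det_apply']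
  refine Finset.sum_eq_zero fun σ _ => ?_
  have hex : ∃ a, blk (ri (σ a)) ≠ blk (ci a) := by
    by_contra h
    push_neg at h
    apply hsum
    calc (∑ a, ((blk (ri a) : ℕ))) = ∑ a, ((blk (ri (σ a)) : ℕ)) :=
          (Equiv.sum_comp σ (fun a => ((blk (ri a) : ℕ)))).symm
      _ = ∑ a, ((blk (ci a) : ℕ)) := by
          exact Finset.sum_congr rfl fun a _ => by rw [h a]
  obtain ⟨a, ha⟩ := hex
  have hz : (∏ i, ((Matrix.of fun i j : Fin r =>
      if blk i = blk j then M i j else 0).submatrix ri ci) (σ i) i) = 0 :=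
    Finset.prod_eq_zero (Finset.mem_univ a) (by
      simp only [Matrix.submatrix_apply, Matrix.of_apply]
      rw [if_neg ha])
  rw [hz, mul_zero]

/-- The claim in the proof of **Theorem A.1** for `G = GL_r`:  if a block upper triangular
matrix `M` (blocks given by a monotone map `blk : Fin r → Fin s` encoding the partition
`r = r₁ + ⋯ + r_s`) satisfies `i×i`-minor bounds `z^(c i)` and has determinant in
`z^(c r)·(k⟦z⟧)ˣ`, then so does its block-diagonal part `L(M)`. -/
theorem levi_part_bounded
    {k : Type*} [Field k] [IsAlgClosed k] {r s : ℕ} (hr : 1 ≤ r)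
    (blk : Fin r → Fin s) (hblk : Monotone blk)
    (M : Matrix (Fin r) (Fin r) (LaurentSeries k)) (hM : IsUnit M)
    (htri : ∀ i j : Fin r, blk j < blk i → M i j = 0)
    (c : Fin r → ℤ)
    (hminors : ∀ i : Fin r, ∀ ri ci : Fin ((i : ℕ) + 1) → Fin r,
      InZPow (c i) ((M.submatrix ri ci).det))
    (hdet : ∃ u : LaurentSeries k, IsPSUnit u ∧
      M.det = zPow (c ⟨r - 1, by omega⟩) * u) :
    IsUnit (Matrix.of fun i j : Fin r => if blk i = blk j then M i j else 0) ∧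
    (∀ i : Fin r, ∀ ri ci : Fin ((i : ℕ) + 1) → Fin r,
      InZPow (c i)
        (((Matrix.of fun i j : Fin r =>
          if blk i = blk j then M i j else 0).submatrix ri ci).det)) ∧
    (∃ u : LaurentSeries k, IsPSUnit u ∧
      (Matrix.of fun i j : Fin r => if blk i = blk j then M i j else 0).det =
        zPow (c ⟨r - 1, by omega⟩) * u) := by
  have hdetL : (Matrix.of fun i j : Fin r => if blk i = blk j then M i j else 0).det
      = M.det := by
    have h := levi_aux_eq blk M htri (id : Fin r → Fin r) (id : Fin r → Fin r) rfl
    simpa [Matrix.submatrix_id_id] using h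
  refine ⟨?_, ?_, ?_⟩
  · rw [Matrix.isUnit_iff_isUnit_det, hdetL, ← Matrix.isUnit_iff_isUnit_det]
    exact hM
  · intro i ri ci
    by_cases hsum : (∑ a, ((blk (ri a) : ℕ))) = ∑ a, ((blk (ci a) : ℕ))
    · rw [levi_aux_eq blk M htri ri ci hsum]
      exact hminors i ri ci
    · rw [levi_aux_zero blk M ri ci hsum]
      intro m _
      simp
  · obtain ⟨u, hu, hMu⟩ := hdet
    exact ⟨u, hu, by rw [hdetL, hMu]⟩

end HVpaper
end
end

section
/- Let k be an algebraically closed field of characteristic p and q = p^e for some e ≥ 1. Then for every g ∈ GL_r(k⟦z⟧) there exists x ∈ GL_r(k⟦z⟧) with g = x⁻¹·σ(x); that is, every element of GL_r(k⟦z⟧) is σ-conjugate to the identity. -/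
/-!
Write `g = ∑ Gₙ zⁿ`, `x = ∑ Xₙ zⁿ` and let `φ` be the `q`-power map of `k`. Comparing coefficients,
`x * g = σ(x)` becomes `φ(X₀) = X₀ G₀` together with `φ(Xₙ) - Xₙ G₀ = ∑_{i<n} Xᵢ G_{n-i}` for
`n ≥ 1`; the first is Lang's theorem for `GL_r(k)`, the others ask for surjectivity of
`X ↦ φ(X) - X G₀`, and solving them successively gives `x`, invertible because `X₀` is.

Both follow from: the fixed vectors of an injective `φ`-semilinear map `ψ` of a
finite-dimensional `k`-space span it. Rows forming a basis of fixed vectors of `v ↦ φ(v) G₀⁻¹`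
give `X₀`, and in such a basis `ψ - 1` acts coordinatewise as `c ↦ c ^ q - c`, which is onto since
`k` is algebraically closed. If the fixed vectors spanned a proper subspace `W`, the map induced on
`V ⧸ W` would have a nonzero fixed vector, which could be corrected into a fixed vector outside `W`.
A nonzero fixed vector comes from a minimal relation `ψ^[n+1] u = ∑ aᵢ ψ^[i] u` (`a₀ ≠ 0` by
injectivity): it reduces the fixed-point equation on the span of the `ψ^[i] u` to `P(t) = t` for a
nonzero polynomial with `P' = 0` and `P(0) = 0`, and `P - X` is separable, so it has a nonzero
root.
-/

noncomputable section

open scoped Classical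

namespace HVpaper

/-- The map `σ` on `k⟦z⟧`:  it fixes `z` and raises each coefficient to the `q`-th power. -/
def psFrob {A : Type*} [CommRing A] (q : ℕ) (f : PowerSeries A) : PowerSeries A :=
  PowerSeries.mk fun n => (PowerSeries.coeff n f) ^ q

open Polynomial

section FixedPointPolynomial

variable {k : Type*} [Field k] [IsAlgClosed k] {P : k[X]}

theorem exists_eval_eq_self (hP : derivative P = 0) : ∃ t, P.eval t = t := by
  have hdeg : (P - X).degree ≠ 0 := fun h => by
    simpa [hP] using congrArg derivative (eq_C_of_degree_eq_zero h)
  obtain ⟨t, ht⟩ := IsAlgClosed.exists_root _ hdeg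
  exact ⟨t, sub_eq_zero.mp (by simpa using ht)⟩

theorem exists_ne_zero_eval_eq_self (hP : derivative P = 0) (hP0 : P.eval 0 = 0) (hP_ne : P ≠ 0) :
    ∃ t ≠ 0, P.eval t = t := by
  obtain ⟨R, hR⟩ : X ∣ P - X := by simp [X_dvd_iff, coeff_zero_eq_eval_zero, hP0]
  -- differentiating `P - X = X * R` at `0` shows `R 0 = -1`, so no root of `R` is `0`
  have hR0 : R.eval 0 = -1 := by
    simpa [hP] using (congrArg (fun f => (derivative f).eval 0) hR).symm
  have hdeg : R.degree ≠ 0 := fun h => hP_ne <| by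
    have hRC := eq_C_of_degree_eq_zero h
    rw [← coeff_zero_eq_eval_zero] at hR0
    rw [hRC, hR0] at hR
    simpa using hR
  obtain ⟨t, ht⟩ := IsAlgClosed.exists_root R hdeg
  refine ⟨t, fun h => by simp_all, sub_eq_zero.mp ?_⟩
  simpa [ht.eq_zero] using congrArg (eval t) hR

end FixedPointPolynomial

section CyclicPoly

variable {k : Type*} [Field k] {q : ℕ}

/-- If `ψ^[n+1] u = ∑ i ≤ n, a i • ψ^[i] u`, the vector `∑ i ≤ n, c i • ψ^[i] u` is fixed by a
`q`-semilinear `ψ` exactly when `c 0 = a 0 * t ^ q`, `c (i + 1) = c i ^ q + a (i + 1) * t ^ q` and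
`c n = t`; `cyclicPoly q a i` is `c i` as a polynomial in `t`. -/
def cyclicPoly (q : ℕ) (a : ℕ → k) : ℕ → k[X]
  | 0 => C (a 0) * X ^ q
  | n + 1 => cyclicPoly q a n ^ q + C (a (n + 1)) * X ^ q

theorem derivative_cyclicPoly (hq : (q : k) = 0) (a : ℕ → k) (n : ℕ) :
    derivative (cyclicPoly q a n) = 0 := by
  induction n with
  | zero => simp [cyclicPoly, derivative_X_pow, hq]
  | succ n ih => simp [cyclicPoly, derivative_pow, hq, ih]

theorem eval_zero_cyclicPoly (hq : q ≠ 0) (a : ℕ → k) (n : ℕ) :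
    (cyclicPoly q a n).eval 0 = 0 := by
  induction n with
  | zero => simp [cyclicPoly, hq]
  | succ n ih => simp [cyclicPoly, hq, ih]

theorem natDegree_cyclicPoly (hq : 1 < q) {a : ℕ → k} (ha : a 0 ≠ 0) (n : ℕ) :
    (cyclicPoly q a n).natDegree = q ^ (n + 1) := by
  induction n with
  | zero => simp [cyclicPoly, natDegree_C_mul_X_pow q _ ha]
  | succ n ih =>
    have hpow : (cyclicPoly q a n ^ q).natDegree = q ^ (n + 2) := by
      rw [natDegree_pow, ih, pow_succ' q (n + 1)]
    rw [cyclicPoly, natDegree_add_eq_left_of_natDegree_lt, hpow]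
    calc (C (a (n + 1)) * X ^ q).natDegree ≤ q := natDegree_C_mul_X_pow_le _ _
      _ < q ^ (n + 2) := by simpa using Nat.pow_lt_pow_right hq (by omega : 1 < n + 2)
      _ = _ := hpow.symm

end CyclicPoly

section Frobenius

open Function

variable {k : Type*} [Field k] {q : ℕ} {φ : k →+* k}

theorem one_lt_of_map_eq_pow (hφ : ∀ c, φ c = c ^ q) (hq : (q : k) = 0) : 1 < q := by
  by_contra! h
  interval_cases q
  · simpa using hφ 0
  · simp at hq

theorem surjective_of_map_eq_pow [IsAlgClosed k] (hφ : ∀ c, φ c = c ^ q) (hq : 0 < q) :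
    Surjective φ := fun c =>
  (IsAlgClosed.exists_pow_nat_eq c hq).imp fun x hx => (hφ x).trans hx

theorem exists_map_sub_self_eq [IsAlgClosed k] (hφ : ∀ c, φ c = c ^ q) (hq : (q : k) = 0)
    (d : k) : ∃ c, φ c - c = d := by
  obtain ⟨c, hc⟩ := exists_eval_eq_self (P := X ^ q - C d) (by simp [derivative_X_pow, hq])
  refine ⟨c, ?_⟩
  rw [hφ]
  simp only [eval_sub, eval_pow, eval_X, eval_C] at hc
  linear_combination hc

end Frobenius

section Semilinear

open Function Finset Submodule

variable {k : Type*} [Field k] {q : ℕ} {φ : k →+* k} {V : Type*} [AddCommGroup V] [Module k V]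
  (ψ : V →ₛₗ[φ] V)

theorem isFixedPt_sum_cyclicPoly (hφ : ∀ c, φ c = c ^ q) {u : V} {n : ℕ} {a : ℕ → k}
    (hrel : ψ^[n + 1] u = ∑ i ∈ range (n + 1), a i • ψ^[i] u) {t : k}
    (ht : (cyclicPoly q a n).eval t = t) :
    IsFixedPt ψ (∑ i ∈ range (n + 1), (cyclicPoly q a i).eval t • ψ^[i] u) := by
  set c : ℕ → k := fun i => (cyclicPoly q a i).eval t with hc
  have hψ : ψ (∑ i ∈ range (n + 1), c i • ψ^[i] u)
      = ∑ i ∈ range (n + 1), c i ^ q • ψ^[i + 1] u := by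
    simp [map_sum, map_smulₛₗ, hφ, iterate_succ_apply']
  have hc0 : c 0 = a 0 * t ^ q := by simp [hc, cyclicPoly]
  have hcs : ∀ i, c (i + 1) = c i ^ q + a (i + 1) * t ^ q := by simp [hc, cyclicPoly]
  unfold IsFixedPt
  rw [hψ, sum_range_succ, show c n = t from ht, hrel, smul_sum, sum_range_succ',
    sum_range_succ' (fun i => c i • ψ^[i] u), ← add_assoc, ← sum_add_distrib]
  congr 1
  · exact sum_congr rfl fun i _ => by rw [hcs]; module
  · rw [hc0]; module

theorem mem_span_image_range_of_sum_eq_zero {s : ℕ → V} {c : ℕ → k} {n : ℕ}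
    (h : ∑ i ∈ range (n + 1), c i • s i = 0) (hc : c n ≠ 0) :
    s n ∈ span k (s '' ↑(range n)) := by
  rw [sum_range_succ, add_eq_zero_iff_neg_eq] at h
  have hs : s n = (-(c n)⁻¹) • ∑ i ∈ range n, c i • s i := by
    rw [neg_smul, ← smul_neg, h, smul_smul, inv_mul_cancel₀ hc, one_smul]
  rw [hs]
  exact smul_mem _ _ ((mem_span_image_finset_iff_exists_fun' k).mpr ⟨c, rfl⟩)

theorem iterate_mem_span_of_coeff_zero (hφ : Surjective φ) (hψ : Injective ψ) {u : V} {n : ℕ}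
    {a : ℕ → k} (hrel : ψ^[n + 1] u = ∑ i ∈ range (n + 1), a i • ψ^[i] u) (ha : a 0 = 0) :
    ψ^[n] u ∈ span k ((ψ^[·] u) '' ↑(range n)) := by
  choose b hb using fun i => hφ (a (i + 1))
  refine (mem_span_image_finset_iff_exists_fun' k).mpr ⟨b, hψ ?_⟩
  rw [← iterate_succ_apply' ψ n u, hrel, sum_range_succ', ha, zero_smul, add_zero, map_sum]
  simp [map_smulₛₗ, hb, iterate_succ_apply']

theorem exists_ne_zero_isFixedPt [IsAlgClosed k] [FiniteDimensional k V] [Nontrivial V]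
    (hφ : ∀ c, φ c = c ^ q) (hq : (q : k) = 0) (hψ : Injective ψ) :
    ∃ v ≠ 0, IsFixedPt ψ v := by
  have hq1 := one_lt_of_map_eq_pow hφ hq
  obtain ⟨u, hu⟩ := exists_ne (0 : V)
  let K : ℕ →o Submodule k V :=
    ⟨fun n => span k ((ψ^[·] u) '' ↑(range n)), fun m n h => span_mono (by gcongr)⟩
  have hex : ∃ n, ψ^[n] u ∈ K n := by
    obtain ⟨n, hn⟩ := monotone_stabilizes_iff_noetherian.mpr inferInstance K
    exact ⟨n, (hn (n + 1) n.le_succ).symm ▸ subset_span ⟨n, by simp, rfl⟩⟩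
  obtain ⟨n, hn⟩ : ∃ n, Nat.find hex = n + 1 :=
    Nat.exists_eq_succ_of_ne_zero fun h => hu <| by
      have h0 := Nat.find_spec hex
      rw [h] at h0
      simpa [K] using h0
  have hmin : ψ^[n] u ∉ K n := Nat.find_min hex (by omega)
  obtain ⟨a, ha⟩ := (mem_span_image_finset_iff_exists_fun' k).mp (hn ▸ Nat.find_spec hex)
  have ha0 : a 0 ≠ 0 := fun h =>
    hmin (iterate_mem_span_of_coeff_zero ψ (surjective_of_map_eq_pow hφ (by omega)) hψ ha.symm h)
  obtain ⟨t, ht0, ht⟩ := exists_ne_zero_eval_eq_self (derivative_cyclicPoly hq a n)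
    (eval_zero_cyclicPoly (by omega) a n)
    (ne_zero_of_natDegree_gt (n := 0) (by rw [natDegree_cyclicPoly hq1 ha0]; positivity))
  refine ⟨_, fun h => hmin (mem_span_image_range_of_sum_eq_zero h ?_),
    isFixedPt_sum_cyclicPoly ψ hφ ha.symm ht⟩
  rwa [ht]

theorem exists_mem_span_fixedPoints_apply_sub_self_eq (hφ : ∀ d, ∃ c, φ c - c = d) {w : V}
    (hw : w ∈ span k (fixedPoints ψ)) : ∃ x ∈ span k (fixedPoints ψ), ψ x - x = w := by
  obtain ⟨n, f, g, rfl⟩ := mem_span_set'.mp hw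
  choose c hc using fun i => hφ (f i)
  refine ⟨∑ i, c i • (g i : V), sum_mem fun i _ => smul_mem _ _ (subset_span (g i).2), ?_⟩
  simp only [map_sum, map_smulₛₗ, ← sum_sub_distrib, (g _).2.eq, ← sub_smul, hc]

theorem span_fixedPoints_eq_top [IsAlgClosed k] [FiniteDimensional k V] (hφ : ∀ c, φ c = c ^ q)
    (hq : (q : k) = 0) (hψ : Injective ψ) : span k (fixedPoints ψ) = ⊤ := by
  set W := span k (fixedPoints ψ)
  have : RingHomSurjective φ :=
    ⟨surjective_of_map_eq_pow hφ (one_lt_of_map_eq_pow hφ hq).le⟩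
  have hW : W ≤ W.comap ψ := span_le.mpr fun v hv => by
    simpa [hv.eq] using (subset_span hv : v ∈ W)
  have hW' : W ≤ W.map ψ := span_le.mpr fun v hv => ⟨v, subset_span hv, hv⟩
  by_contra hne
  have : Nontrivial (V ⧸ W) := Submodule.Quotient.nontrivial_iff.mpr hne
  have hinj : Injective (W.mapQ W ψ hW) := by
    refine (injective_iff_map_eq_zero _).mpr fun x hx => ?_
    obtain ⟨v, rfl⟩ := Submodule.Quotient.mk_surjective W x
    rw [mapQ_apply, Submodule.Quotient.mk_eq_zero] at hx
    rw [Submodule.Quotient.mk_eq_zero]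
    obtain ⟨w, hw, hψw⟩ := hW' hx
    exact hψ hψw ▸ hw
  obtain ⟨v, hv0, hv⟩ := exists_ne_zero_isFixedPt _ hφ hq hinj
  obtain ⟨v, rfl⟩ := Submodule.Quotient.mk_surjective W v
  have hvW : ψ v - v ∈ W := (Submodule.Quotient.eq W).mp hv
  -- correcting `v` by a solution of `ψ x - x = ψ v - v` inside `W` makes it fixed
  obtain ⟨x, hxW, hx⟩ :=
    exists_mem_span_fixedPoints_apply_sub_self_eq ψ (exists_map_sub_self_eq hφ hq) hvW
  have hfix : v - x ∈ W := subset_span <| show ψ (v - x) = v - x by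
    rw [map_sub]; linear_combination (norm := module) -hx
  exact hv0 ((Submodule.Quotient.mk_eq_zero W).mpr (by simpa using add_mem hfix hxW))

theorem exists_apply_sub_self_eq [IsAlgClosed k] [FiniteDimensional k V] (hφ : ∀ c, φ c = c ^ q)
    (hq : (q : k) = 0) (hψ : Injective ψ) (w : V) : ∃ x, ψ x - x = w := by
  obtain ⟨x, -, hx⟩ :=
    exists_mem_span_fixedPoints_apply_sub_self_eq ψ (exists_map_sub_self_eq hφ hq)
      (span_fixedPoints_eq_top ψ hφ hq hψ ▸ mem_top : w ∈ span k (fixedPoints ψ))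
  exact ⟨x, hx⟩

end Semilinear

section MatrixLang

open Function Matrix

variable {k : Type*} [Field k] {q : ℕ} {φ : k →+* k} {n : Type*} [Fintype n]

def frobVecMul (φ : k →+* k) (B : Matrix n n k) : (n → k) →ₛₗ[φ] (n → k) where
  toFun v := (φ ∘ v) ᵥ* B
  map_add' v w := by rw [← add_vecMul]; congr 1; ext; simp
  map_smul' c v := by rw [← smul_vecMul]; congr 1; ext; simp

theorem injective_frobVecMul [DecidableEq n] {B : Matrix n n k} (hB : IsUnit B) :
    Injective (frobVecMul φ B) :=
  (vecMul_injective_iff_isUnit.mpr hB).comp φ.injective.comp_left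

theorem exists_isUnit_map_eq_mul [DecidableEq n] [IsAlgClosed k] (hφ : ∀ c, φ c = c ^ q)
    (hq : (q : k) = 0) {A : Matrix n n k} (hA : IsUnit A) :
    ∃ X : Matrix n n k, IsUnit X ∧ X.map φ = X * A := by
  set ψ := frobVecMul φ A⁻¹
  have hspan :=
    span_fixedPoints_eq_top ψ hφ hq (injective_frobVecMul (isUnit_nonsing_inv_iff.mpr hA))
  obtain ⟨b, hb, hbspan, hbli⟩ := exists_linearIndependent k (fixedPoints ψ)
  let e : b ≃ n := (Module.Basis.mk hbli (by rw [Subtype.range_coe, hbspan, hspan])).indexEquiv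
    (Pi.basisFun k n)
  let X : Matrix n n k := of fun i => (e.symm i : n → k)
  have hX : X.map φ * A⁻¹ = X := funext fun i => hb (e.symm i).2
  refine ⟨X, linearIndependent_rows_iff_isUnit.mp (hbli.comp _ e.symm.injective), ?_⟩
  calc X.map φ = X.map φ * A⁻¹ * A :=
        (nonsing_inv_mul_cancel_right _ _ ((isUnit_iff_isUnit_det A).mp hA)).symm
    _ = X * A := by rw [hX]

theorem exists_map_eq_mul_add [DecidableEq n] [IsAlgClosed k] (hφ : ∀ c, φ c = c ^ q)
    (hq : (q : k) = 0) {A : Matrix n n k} (hA : IsUnit A) (S : Matrix n n k) :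
    ∃ X : Matrix n n k, X.map φ = X * A + S := by
  choose x hx using fun i => exists_apply_sub_self_eq (frobVecMul φ A⁻¹) hφ hq
    (injective_frobVecMul (isUnit_nonsing_inv_iff.mpr hA)) (S i ᵥ* A⁻¹)
  have hX : (of x).map φ * A⁻¹ = of x + S * A⁻¹ := funext fun i => eq_add_of_sub_eq' (hx i)
  refine ⟨of x, ?_⟩
  have hA' := (isUnit_iff_isUnit_det A).mp hA
  calc (of x).map φ = (of x).map φ * A⁻¹ * A := (nonsing_inv_mul_cancel_right _ _ hA').symm
    _ = of x * A + S := by rw [hX, add_mul, nonsing_inv_mul_cancel_right _ _ hA']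

end MatrixLang

theorem exists_seq_of_forall_exists {α : Type*} (P : ∀ n, (Fin n → α) → α → Prop)
    (h : ∀ n x, ∃ a, P n x a) : ∃ X : ℕ → α, ∀ n, P n (fun i => X i) (X n) := by
  let X : ℕ → α := Nat.strongRec fun n prev => Classical.choose (h n fun i => prev i i.2)
  refine ⟨X, fun n => ?_⟩
  rw [show X n = Classical.choose (h n fun i => X i) from Nat.strongRec_eq _ n]
  exact Classical.choose_spec _

section PowerSeriesMatrix

open Matrix PowerSeries Finset

variable {R : Type*} [CommRing R] {n : Type*} [Fintype n]

theorem map_coeff_mul (M N : Matrix n n R⟦X⟧) (m : ℕ) :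
    (M * N).map (coeff m) = ∑ p ∈ antidiagonal m, M.map (coeff p.1) * N.map (coeff p.2) := by
  ext i j
  simp only [map_apply, mul_apply, map_sum, PowerSeries.coeff_mul, Matrix.sum_apply]
  exact sum_comm

theorem isUnit_iff_isUnit_map_coeff_zero [DecidableEq n] (M : Matrix n n R⟦X⟧) :
    IsUnit M ↔ IsUnit (M.map (coeff 0)) := by
  rw [isUnit_iff_isUnit_det, isUnit_iff_isUnit_det, isUnit_iff_constantCoeff,
    coeff_zero_eq_constantCoeff, ← RingHom.mapMatrix_apply, ← RingHom.map_det]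

theorem exists_isUnit_mul_eq_map_map [DecidableEq n] (φ : R →+* R) {g : Matrix n n R⟦X⟧}
    (h0 : ∃ X : Matrix n n R, IsUnit X ∧ X.map φ = X * g.map (coeff 0))
    (hstep : ∀ S, ∃ X : Matrix n n R, X.map φ = X * g.map (coeff 0) + S) :
    ∃ x, IsUnit x ∧ x * g = x.map (PowerSeries.map φ) := by
  set G : ℕ → Matrix n n R := fun m => g.map (coeff m)
  obtain ⟨X, hX⟩ := exists_seq_of_forall_exists
    (fun m (prev : Fin m → Matrix n n R) Y =>
      Y.map φ = Y * G 0 + ∑ i, prev i * G (m - i) ∧ (m = 0 → IsUnit Y))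
    fun m prev => by
      rcases m with _ | m
      · obtain ⟨Y, hYu, hY⟩ := h0
        exact ⟨Y, by rw [Fin.sum_univ_zero, add_zero]; exact hY, fun _ => hYu⟩
      · obtain ⟨Y, hY⟩ := hstep (∑ i, prev i * G (m + 1 - i))
        exact ⟨Y, hY, by omega⟩
  let x : Matrix n n R⟦X⟧ := of fun i j => mk fun m => X m i j
  have hx : ∀ m, x.map (coeff m) = X m := fun m => by ext; simp [x]
  refine ⟨x, (isUnit_iff_isUnit_map_coeff_zero x).mpr (hx 0 ▸ (hX 0).2 rfl), ?_⟩
  ext i j m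
  have hm : (x * g).map (coeff m) = (X m).map φ := by
    rw [map_coeff_mul, Nat.sum_antidiagonal_eq_sum_range_succ_mk, sum_range_succ,
      ← Fin.sum_univ_eq_sum_range, (hX m).1, Nat.sub_self, add_comm]
    simp [hx, G]
  simpa [x] using congrFun₂ hm i j

end PowerSeriesMatrix

/-- The pro-algebraic version of **Lang's theorem** used in Remark 8.1 of the paper:  every
element of `GL_r(k⟦z⟧)` is `σ`-conjugate to the identity, i.e. of the form `x⁻¹·σ(x)`. -/
theorem lang_power_series
    {p : ℕ} (hp : p.Prime) {e : ℕ} (he : 1 ≤ e) {q : ℕ} (hq : q = p ^ e)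
    {k : Type*} [Field k] [IsAlgClosed k] [CharP k p]
    {r : ℕ}
    (g : Matrix (Fin r) (Fin r) (PowerSeries k)) (hg : IsUnit g) :
    ∃ x : Matrix (Fin r) (Fin r) (PowerSeries k),
      IsUnit x ∧ g = x⁻¹ * x.map (psFrob q) := by
  have : ExpChar k p := ExpChar.prime hp
  have hφ : ∀ c : k, iterateFrobenius k p e c = c ^ q := fun c => by
    rw [iterateFrobenius_def, hq]
  have hqk : (q : k) = 0 := by
    rw [hq, Nat.cast_pow, CharP.cast_eq_zero, zero_pow (by omega)]
  have hσ : psFrob q = PowerSeries.map (iterateFrobenius k p e) := funext fun f => by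
    ext m
    simp [psFrob, hφ]
  have hg0 := (isUnit_iff_isUnit_map_coeff_zero g).mp hg
  obtain ⟨x, hx, hxg⟩ := exists_isUnit_mul_eq_map_map _ (exists_isUnit_map_eq_mul hφ hqk hg0)
    (exists_map_eq_mul_add hφ hqk hg0)
  refine ⟨x, hx, ?_⟩
  rw [hσ, ← hxg, Matrix.nonsing_inv_mul_cancel_left _ _ ((Matrix.isUnit_iff_isUnit_det x).mp hx)]

end HVpaper
end
end
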